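/- arXiv:1806.00775 — 2 statements merged into one kernel-verified Lean document; each statement's English description precedes it below -/
import Mathlib

section
/- Decoupling lemma for MDP perturbations: let φ be an ergodic finite MDP and let U₁, U₂ be disjoint sets of state-action pairs (x,a) with a suboptimal in state x under φ. For a fixed kernel pair (p,q), define MDPs ψ_j (j = 0,1,2) that equal (p,q) on U_j (with U₀ = U₁ ∪ U₂) and equal φ elsewhere. If Π*(φ) ∩ Π*(ψ₀) = ∅, then Π*(φ) ∩ Π*(ψ₁) = ∅ or Π*(φ) ∩ Π*(ψ₂) = ∅. -/
open Classical

section MDP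

variable {S A : Type*}

/-- Finite-horizon value iterates of a stationary deterministic policy `f` in the MDP
with transition kernel `p` and mean reward `r`. -/
noncomputable def valueIter [Fintype S] (p : S → A → S → ℝ) (r : S → A → ℝ)
    (f : S → A) : ℕ → S → ℝ
  | 0 => fun _ => 0
  | n + 1 => fun x => r x (f x) + ∑ y, p x (f x) y * valueIter p r f n y

/-- Gain (long-term average reward) of policy `f` started from `x`. -/
noncomputable def gain [Fintype S] (p : S → A → S → ℝ) (r : S → A → ℝ)
    (f : S → A) (x : S) : ℝ :=
  Filter.atTop.limsup (fun n : ℕ => valueIter p r f n x / n)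

/-- The set `Π*` of stationary deterministic policies with maximal gain from every state. -/
def OptPolicies [Fintype S] (p : S → A → S → ℝ) (r : S → A → ℝ) : Set (S → A) :=
  {f | ∀ g : S → A, ∀ x : S, gain p r g x ≤ gain p r f x}

/-- Transition matrix of the Markov chain induced by policy `f`. -/
def transMatrix (p : S → A → S → ℝ) (f : S → A) : Matrix S S ℝ :=
  fun x y => p x (f x) y

/-- Ergodicity: under any stationary policy, the induced Markov chain is irreducible. -/
def IsErgodic [Fintype S] [DecidableEq S] (p : S → A → S → ℝ) : Prop :=
  ∀ f : S → A, ∀ x y : S, ∃ n : ℕ, 0 < n ∧ 0 < ((transMatrix p f) ^ n) x y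

/-- Transition kernel equal to `pbar` on `U` and to `p` elsewhere. -/
def perturbP [DecidableEq S] [DecidableEq A] (U : Finset (S × A))
    (p pbar : S → A → S → ℝ) : S → A → S → ℝ :=
  fun x a y => if (x, a) ∈ U then pbar x a y else p x a y

/-- Reward function equal to `rbar` on `U` and to `r` elsewhere. -/
def perturbR [DecidableEq S] [DecidableEq A] (U : Finset (S × A))
    (r rbar : S → A → ℝ) : S → A → ℝ :=
  fun x a => if (x, a) ∈ U then rbar x a else r x a


/-!
Take a solution `(g, b)` of the average-reward optimality equation of `φ`, which exists by
ergodicity (solve the Poisson equation of every policy and improve the best one), and a policy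
`f` attaining it. If every pair of `U₀` also satisfies the Bellman inequality
`r̄ + p̄ b ≤ g + b`, then `(g, b)` solves the optimality equation of `ψ₀` too, and `f`, which
avoids `U₀`, lies in `Π*(φ) ∩ Π*(ψ₀)`. Otherwise some pair `(x₀, a₀) ∈ Uⱼ` violates it strictly.
Switching `f` to `a₀` at `x₀` then has `ψⱼ`-gain `> g`, since under it `x₀` is visited a positive
fraction of the time, whereas every `φ`-optimal policy avoids `Uⱼ` and so has `ψⱼ`-gain `≤ g`.
-/

open Finset Filter Matrix

lemma limsup_div_le_of_le {u : ℕ → ℝ} {g C : ℝ} (h0 : ∀ t, 0 ≤ u t)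
    (hu : ∀ t, u t ≤ t * g + C) : limsup (fun t => u t / t) atTop ≤ g := by
  have hlim : Tendsto (fun t : ℕ => g + C / t) atTop (nhds g) := by
    simpa using (tendsto_const_div_atTop_nhds_zero_nat C).const_add g
  refine (limsup_le_limsup ?_ ?_ hlim.isBoundedUnder_le).trans_eq hlim.limsup_eq
  · filter_upwards [eventually_gt_atTop 0] with t ht
    rw [div_le_iff₀ (Nat.cast_pos.2 ht), add_mul, div_mul_cancel₀ _ (Nat.cast_ne_zero.2 ht.ne')]
    linarith [hu t]
  · exact (isBoundedUnder_of_eventually_ge (a := 0) <|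
      Eventually.of_forall fun t => div_nonneg (h0 t) t.cast_nonneg).isCoboundedUnder_le

lemma le_limsup_div_of_le {u : ℕ → ℝ} {g C : ℝ} (h1 : ∀ t, u t ≤ t)
    (hu : ∀ t, t * g - C ≤ u t) : g ≤ limsup (fun t => u t / t) atTop := by
  have hlim : Tendsto (fun t : ℕ => g - C / t) atTop (nhds g) := by
    simpa using (tendsto_const_div_atTop_nhds_zero_nat C).const_sub g
  refine hlim.limsup_eq.symm.trans_le <|
    limsup_le_limsup ?_ hlim.isBoundedUnder_ge.isCoboundedUnder_le ?_
  · filter_upwards [eventually_gt_atTop 0] with t ht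
    rw [le_div_iff₀ (Nat.cast_pos.2 ht), sub_mul, div_mul_cancel₀ _ (Nat.cast_ne_zero.2 ht.ne')]
    linarith [hu t]
  · refine isBoundedUnder_of_eventually_le (a := 1) (Eventually.of_forall fun t => ?_)
    rcases t.eq_zero_or_pos with rfl | ht
    · simp
    · exact (div_le_one (Nat.cast_pos.2 ht)).2 (h1 t)

lemma mul_le_of_block_sums_ge {a : ℕ → ℝ} {N : ℕ} {δ : ℝ} (ha : ∀ k, 0 ≤ a k) (hN : 0 < N)
    (hδ : 0 ≤ δ) (hblock : ∀ i, δ ≤ ∑ k ∈ range N, a (i + k)) (n : ℕ) :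
    δ * n ≤ N * (∑ k ∈ range n, a k + δ) := by
  have hblocks : ∀ j : ℕ, j * δ ≤ ∑ k ∈ range (N * j), a k := by
    intro j
    induction j with
    | zero => simp
    | succ j ih =>
      rw [Nat.mul_succ, sum_range_add]
      push_cast
      linarith [hblock (N * j)]
  set j := n / N
  have hn : (n : ℝ) ≤ N * (j + 1) := by exact_mod_cast (Nat.lt_mul_div_succ n hN).le
  have hsub : ∑ k ∈ range (N * j), a k ≤ ∑ k ∈ range n, a k :=
    sum_le_sum_of_subset_of_nonneg (range_mono (Nat.mul_div_le n N)) fun k _ _ => ha k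
  calc δ * n ≤ δ * (N * (j + 1)) := mul_le_mul_of_nonneg_left hn hδ
    _ = N * (j * δ + δ) := by ring
    _ ≤ N * (∑ k ∈ range n, a k + δ) := by gcongr; linarith [hblocks j]

namespace Matrix

variable {n : Type*} [Fintype n] {M P : Matrix n n ℝ}

lemma exists_pos_of_mul_apply_pos {N : Matrix n n ℝ} (hM : ∀ i j, 0 ≤ M i j) {i j : n}
    (h : 0 < (M * N) i j) : ∃ k, 0 < M i k ∧ 0 < N k j := by
  by_contra! hne
  refine h.not_ge (sum_nonpos fun k _ => ?_)
  rcases (hM i k).lt_or_eq with hk | hk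
  · exact mul_nonpos_of_nonneg_of_nonpos (hM i k) (hne k hk)
  · simp [← hk]

lemma mul_apply_pos {N : Matrix n n ℝ} (hM : ∀ i j, 0 ≤ M i j) (hN : ∀ i j, 0 ≤ N i j)
    {i k j : n} (hik : 0 < M i k) (hkj : 0 < N k j) : 0 < (M * N) i j :=
  (mul_pos hik hkj).trans_le <|
    single_le_sum (f := fun l => M i l * N l j) (fun l _ => mul_nonneg (hM i l) (hN l j))
      (mem_univ k)

variable [DecidableEq n]

lemma mulVec_apply_le_of_mem_rowStochastic (hM : M ∈ rowStochastic ℝ n) {v : n → ℝ} {c : ℝ}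
    (hv : ∀ y, v y ≤ c) (x : n) : (M *ᵥ v) x ≤ c :=
  calc (M *ᵥ v) x = ∑ y, M x y * v y := rfl
    _ ≤ ∑ y, M x y * c := sum_le_sum fun y _ => mul_le_mul_of_nonneg_left (hv y) (hM.1 x y)
    _ = c := by rw [← sum_mul, sum_row_of_mem_rowStochastic hM, one_mul]

lemma le_mulVec_apply_of_mem_rowStochastic (hM : M ∈ rowStochastic ℝ n) {v : n → ℝ} {c : ℝ}
    (hv : ∀ y, c ≤ v y) (x : n) : c ≤ (M *ᵥ v) x := by
  simpa [mulVec_neg] using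
    mulVec_apply_le_of_mem_rowStochastic hM (v := -v) (c := -c) (fun y => neg_le_neg (hv y)) x

lemma abs_mulVec_apply_le_of_mem_rowStochastic (hM : M ∈ rowStochastic ℝ n) {v : n → ℝ}
    {c : ℝ} (hv : ∀ y, |v y| ≤ c) (x : n) : |(M *ᵥ v) x| ≤ c :=
  abs_le.2 ⟨le_mulVec_apply_of_mem_rowStochastic hM (fun y => (abs_le.1 (hv y)).1) x,
    mulVec_apply_le_of_mem_rowStochastic hM (fun y => (abs_le.1 (hv y)).2) x⟩

lemma apply_eq_of_mulVec_eq_self (hM : M ∈ rowStochastic ℝ n)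
    (hirr : ∀ i j, ∃ m, 0 < (M ^ m) i j) {v : n → ℝ} (hv : M *ᵥ v = v) (i j : n) :
    v i = v j := by
  have hpow : ∀ m, M ^ m *ᵥ v = v := by
    intro m
    induction m with
    | zero => simp
    | succ m ih => rw [pow_succ, ← mulVec_mulVec, hv, ih]
  obtain ⟨k, -, hk⟩ := univ.exists_max_image v ⟨i, mem_univ i⟩
  suffices h : ∀ j, v j = v k by rw [h i, h j]
  intro j
  obtain ⟨m, hm⟩ := hirr k j
  have hMm := pow_mem hM m
  have hzero : ∑ y, (M ^ m) k y * (v k - v y) = 0 := by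
    simp only [mul_sub, sum_sub_distrib, ← sum_mul, sum_row_of_mem_rowStochastic hMm, one_mul]
    exact sub_eq_zero.2 (congrFun (hpow m) k).symm
  have hkj := (sum_eq_zero_iff_of_nonneg fun y _ =>
    mul_nonneg (hMm.1 k y) (sub_nonneg.2 (hk y (mem_univ y)))).1 hzero j (mem_univ j)
  linarith [(mul_eq_zero.1 hkj).resolve_left hm.ne']

lemma exists_poisson_solution [Nonempty n] (hM : M ∈ rowStochastic ℝ n)
    (hirr : ∀ i j, ∃ m, 0 < (M ^ m) i j) (ρ : n → ℝ) :
    ∃ (g : ℝ) (b : n → ℝ), ∀ x, ρ x + (M *ᵥ b) x = g + b x := by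
  obtain ⟨x₀⟩ := ‹Nonempty n›
  -- `b ↦ b - M b` has the constants as kernel; adding `b x₀` makes it injective, hence onto
  let Ψ : (n → ℝ) →ₗ[ℝ] (n → ℝ) :=
    LinearMap.id - M.mulVecLin + (LinearMap.proj x₀).smulRight 1
  have hΨ : ∀ b x, Ψ b x = b x - (M *ᵥ b) x + b x₀ := fun b x => by simp [Ψ]
  have hinj : Function.Injective Ψ := by
    refine (injective_iff_map_eq_zero Ψ).2 fun b hb => ?_
    have hb' : ∀ x, (M *ᵥ b) x = b x + b x₀ := fun x => by
      have := congrFun hb x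
      rw [hΨ, Pi.zero_apply] at this
      linarith
    obtain ⟨xM, -, hxM⟩ := univ.exists_max_image b ⟨x₀, mem_univ x₀⟩
    obtain ⟨xm, -, hxm⟩ := univ.exists_min_image b ⟨x₀, mem_univ x₀⟩
    have hle := mulVec_apply_le_of_mem_rowStochastic hM (fun y => hxM y (mem_univ y)) xM
    have hge := le_mulVec_apply_of_mem_rowStochastic hM (fun y => hxm y (mem_univ y)) xm
    have h₀ : b x₀ = 0 := by linarith [hb' xM, hb' xm]
    have hharm : M *ᵥ b = b := funext fun x => by rw [hb', h₀, add_zero]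
    exact funext fun x => (apply_eq_of_mulVec_eq_self hM hirr hharm x x₀).trans h₀
  obtain ⟨b, hb⟩ := LinearMap.injective_iff_surjective.1 hinj ρ
  exact ⟨b x₀, b, fun x => by linarith [hΨ b x, congrFun hb x]⟩

/-- A path of `M` to `x₀`, cut at its first visit to `x₀`, only uses rows where `P = M`. -/
lemma exists_pow_apply_pos_of_rows_eq (hP : P ∈ rowStochastic ℝ n) (hM : ∀ i j, 0 ≤ M i j)
    {x₀ : n} (hrows : ∀ z ≠ x₀, P z = M z) (hacc : ∀ z, ∃ m, 0 < (M ^ m) z x₀) (z : n) :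
    ∃ m, 0 < (P ^ m) z x₀ := by
  by_cases hz : z = x₀
  · exact ⟨0, by simp [hz]⟩
  obtain ⟨m, hm⟩ := hacc z
  induction m generalizing z with
  | zero => simp [one_apply_ne hz] at hm
  | succ m ih =>
    rw [pow_succ'] at hm
    obtain ⟨w, hzw, hwx⟩ := exists_pos_of_mul_apply_pos hM hm
    rw [← hrows z hz] at hzw
    by_cases hw : w = x₀
    · exact ⟨1, by simpa [hw] using hzw⟩
    obtain ⟨k, hk⟩ := ih w hw hwx
    exact ⟨k + 1, pow_succ' P k ▸ mul_apply_pos hP.1 (pow_mem hP k).1 hzw hk⟩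

lemma exists_pos_linear_le_sum_pow_apply_self (hP : P ∈ rowStochastic ℝ n) {x₀ : n}
    (hacc : ∀ z, ∃ m, 0 < (P ^ m) z x₀) :
    ∃ c > 0, ∃ C, ∀ t : ℕ, c * t - C ≤ ∑ k ∈ range t, (P ^ k) x₀ x₀ := by
  choose m hm using hacc
  set N := univ.sup m + 1
  let hit : n → ℝ := fun z => ∑ k ∈ range N, (P ^ k) z x₀
  obtain ⟨z₀, -, hz₀⟩ := univ.exists_min_image hit ⟨x₀, mem_univ x₀⟩
  have hδ : 0 < hit z₀ :=
    (hm z₀).trans_le <| single_le_sum (f := fun k => (P ^ k) z₀ x₀)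
      (fun k _ => (pow_mem hP k).1 z₀ x₀)
      (mem_range.2 (Nat.lt_succ_of_le (le_sup (mem_univ z₀))))
  -- from wherever the chain is at time `i`, it visits `x₀` at least `hit z₀` times (in
  -- expectation) during the next `N` steps
  have hblock : ∀ i, hit z₀ ≤ ∑ k ∈ range N, (P ^ (i + k)) x₀ x₀ := fun i =>
    calc hit z₀ = ∑ z, (P ^ i) x₀ z * hit z₀ := by
          rw [← sum_mul, sum_row_of_mem_rowStochastic (pow_mem hP i), one_mul]
      _ ≤ ∑ z, (P ^ i) x₀ z * hit z := sum_le_sum fun z _ =>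
          mul_le_mul_of_nonneg_left (hz₀ z (mem_univ z)) ((pow_mem hP i).1 x₀ z)
      _ = ∑ k ∈ range N, (P ^ (i + k)) x₀ x₀ := by
          simp only [hit, mul_sum, pow_add, mul_apply]
          exact sum_comm
  have hN : (0 : ℝ) < N := by positivity
  refine ⟨hit z₀ / N, by positivity, hit z₀, fun t => ?_⟩
  have := mul_le_of_block_sums_ge (fun k => (pow_mem hP k).1 x₀ x₀) (Nat.succ_pos _) hδ.le
    hblock t
  rw [sub_le_iff_le_add, div_mul_eq_mul_div, div_le_iff₀ hN]
  linarith

end Matrix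

def IsTransitionKernel [Fintype S] (p : S → A → S → ℝ) : Prop :=
  ∀ x a, (∀ y, 0 ≤ p x a y) ∧ ∑ y, p x a y = 1

def qValue [Fintype S] (p : S → A → S → ℝ) (r : S → A → ℝ) (b : S → ℝ) (x : S) (a : A) : ℝ :=
  r x a + ∑ y, p x a y * b y

def bellmanResidual [Fintype S] (p : S → A → S → ℝ) (r : S → A → ℝ) (g : ℝ) (b : S → ℝ)
    (f : S → A) (x : S) : ℝ :=
  qValue p r b x (f x) - (g + b x)

section Gain

variable [Fintype S] [DecidableEq S] {p : S → A → S → ℝ} {r : S → A → ℝ}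

lemma transMatrix_mem_rowStochastic (hp : IsTransitionKernel p) (f : S → A) :
    transMatrix p f ∈ rowStochastic ℝ S :=
  mem_rowStochastic_iff_sum.2 ⟨fun x y => (hp x (f x)).1 y, fun x => (hp x (f x)).2⟩

omit [DecidableEq S] in
lemma valueIter_succ (f : S → A) (t : ℕ) :
    valueIter p r f (t + 1) = (fun x => r x (f x)) + transMatrix p f *ᵥ valueIter p r f t :=
  rfl

lemma valueIter_nonneg (hp : IsTransitionKernel p) (hr : ∀ x a, 0 ≤ r x a) (f : S → A)
    (t : ℕ) (x : S) : 0 ≤ valueIter p r f t x := by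
  induction t generalizing x with
  | zero => exact le_rfl
  | succ t ih =>
    rw [valueIter_succ]
    exact add_nonneg (hr x (f x))
      (nonneg_mulVec_of_mem_rowStochastic (transMatrix_mem_rowStochastic hp f) ih x)

lemma valueIter_le (hp : IsTransitionKernel p) (hr : ∀ x a, r x a ≤ 1) (f : S → A)
    (t : ℕ) (x : S) : valueIter p r f t x ≤ t := by
  induction t generalizing x with
  | zero => simp [valueIter]
  | succ t ih =>
    rw [valueIter_succ, Pi.add_apply, Nat.cast_succ, add_comm (t : ℝ)]
    exact add_le_add (hr x (f x))
      (mulVec_apply_le_of_mem_rowStochastic (transMatrix_mem_rowStochastic hp f) ih x)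

lemma valueIter_eq (hp : IsTransitionKernel p) (f : S → A) (g : ℝ) (b : S → ℝ) (t : ℕ) :
    valueIter p r f t = ((t : ℝ) * g) • 1 + b - transMatrix p f ^ t *ᵥ b +
      ∑ k ∈ range t, transMatrix p f ^ k *ᵥ bellmanResidual p r g b f := by
  have hP1 := one_vecMul_of_mem_rowStochastic (transMatrix_mem_rowStochastic hp f)
  induction t with
  | zero => ext x; simp [valueIter]
  | succ t ih =>
    rw [valueIter_succ, ih, sum_range_succ', pow_zero, one_mulVec]
    simp only [mulVec_add, mulVec_sub, mulVec_smul, hP1, mulVec_sum, mulVec_mulVec, ← pow_succ']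
    ext x
    simp only [Pi.add_apply, Pi.sub_apply, Pi.smul_apply, Pi.one_apply, smul_eq_mul,
      Finset.sum_apply, bellmanResidual, qValue]
    push_cast
    rw [show (transMatrix p f *ᵥ b) x = ∑ y, p x (f x) y * b y from rfl]
    ring

lemma abs_valueIter_sub_le (hp : IsTransitionKernel p) (f : S → A) (g : ℝ) (b : S → ℝ)
    (t : ℕ) (x : S) :
    |valueIter p r f t x -
        (t * g + ∑ k ∈ range t, (transMatrix p f ^ k *ᵥ bellmanResidual p r g b f) x)| ≤
      2 * ∑ y, |b y| := by
  have hb : ∀ y, |b y| ≤ ∑ y, |b y| := fun y =>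
    single_le_sum (f := fun y => |b y|) (fun y _ => abs_nonneg (b y)) (mem_univ y)
  have hPb := abs_mulVec_apply_le_of_mem_rowStochastic
    (pow_mem (transMatrix_mem_rowStochastic hp f) t) hb x
  rw [valueIter_eq hp f g b t]
  simp only [Pi.add_apply, Pi.sub_apply, Pi.smul_apply, Pi.one_apply, smul_eq_mul, mul_one,
    Finset.sum_apply]
  rw [abs_le] at hPb ⊢
  constructor <;> linarith [abs_le.1 (hb x)]

lemma gain_le_of_qValue_le (hp : IsTransitionKernel p) (hr : ∀ x a, 0 ≤ r x a) {f : S → A}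
    {g : ℝ} {b : S → ℝ} (hf : ∀ z, qValue p r b z (f z) ≤ g + b z) (x : S) :
    gain p r f x ≤ g := by
  refine limsup_div_le_of_le (C := 2 * ∑ y, |b y|) (valueIter_nonneg hp hr f · x) fun t => ?_
  have hres : ∑ k ∈ range t, (transMatrix p f ^ k *ᵥ bellmanResidual p r g b f) x ≤ 0 :=
    sum_nonpos fun k _ => mulVec_apply_le_of_mem_rowStochastic
      (pow_mem (transMatrix_mem_rowStochastic hp f) k) (fun z => sub_nonpos.2 (hf z)) x
  linarith [(abs_le.1 (abs_valueIter_sub_le (r := r) hp f g b t x)).2]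

lemma add_le_gain_of_le_sum_residual (hp : IsTransitionKernel p) (hr : ∀ x a, r x a ≤ 1)
    {f : S → A} {g : ℝ} {b : S → ℝ} {x : S} {c C : ℝ}
    (hres : ∀ t : ℕ, c * t - C ≤
      ∑ k ∈ range t, (transMatrix p f ^ k *ᵥ bellmanResidual p r g b f) x) :
    g + c ≤ gain p r f x :=
  le_limsup_div_of_le (C := C + 2 * ∑ y, |b y|) (valueIter_le hp hr f · x) fun t => by
    linarith [(abs_le.1 (abs_valueIter_sub_le (r := r) hp f g b t x)).1, hres t]

lemma le_gain_of_le_qValue (hp : IsTransitionKernel p) (hr : ∀ x a, r x a ≤ 1) {f : S → A}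
    {g : ℝ} {b : S → ℝ} (hf : ∀ z, g + b z ≤ qValue p r b z (f z)) (x : S) :
    g ≤ gain p r f x := by
  simpa using add_le_gain_of_le_sum_residual hp hr (c := 0) (C := 0) fun t => by
    simpa using sum_nonneg fun k _ => nonneg_mulVec_of_mem_rowStochastic
      (pow_mem (transMatrix_mem_rowStochastic hp f) k)
      (fun z => show 0 ≤ bellmanResidual p r g b f z from sub_nonneg.2 (hf z)) x

/-- The positive residual at `x₀` is collected a positive fraction of the time. -/
lemma lt_gain_of_le_qValue (hp : IsTransitionKernel p) (hr : ∀ x a, r x a ≤ 1) {f : S → A}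
    {g : ℝ} {b : S → ℝ} (hf : ∀ z, g + b z ≤ qValue p r b z (f z)) {x₀ : S}
    (hlt : g + b x₀ < qValue p r b x₀ (f x₀))
    (hacc : ∀ z, ∃ m, 0 < (transMatrix p f ^ m) z x₀) :
    g < gain p r f x₀ := by
  have hP := transMatrix_mem_rowStochastic hp f
  obtain ⟨c, hc, C, hvisits⟩ := exists_pos_linear_le_sum_pow_apply_self hP hacc
  set ε := bellmanResidual p r g b f x₀
  have hε : 0 < ε := sub_pos.2 hlt
  have hres : ∀ k, ε * (transMatrix p f ^ k) x₀ x₀ ≤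
      (transMatrix p f ^ k *ᵥ bellmanResidual p r g b f) x₀ := fun k =>
    single_le_sum (f := fun z => (transMatrix p f ^ k) x₀ z * bellmanResidual p r g b f z)
      (fun z _ => mul_nonneg ((pow_mem hP k).1 x₀ z) (sub_nonneg.2 (hf z))) (mem_univ x₀)
      |>.trans_eq' (mul_comm _ _)
  have := add_le_gain_of_le_sum_residual hp hr (c := ε * c) (C := ε * C) fun t =>
    calc ε * c * t - ε * C = ε * (c * t - C) := by ring
      _ ≤ ε * ∑ k ∈ range t, (transMatrix p f ^ k) x₀ x₀ :=
        mul_le_mul_of_nonneg_left (hvisits t) hε.le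
      _ ≤ _ := by rw [mul_sum]; exact sum_le_sum fun k _ => hres k
  linarith [mul_pos hε hc]

end Gain

section Optimality

variable [Fintype S] [DecidableEq S] {p : S → A → S → ℝ} {r : S → A → ℝ}

lemma IsErgodic.exists_pow_apply_pos (herg : IsErgodic p) (f : S → A) (z y : S) :
    ∃ m, 0 < (transMatrix p f ^ m) z y :=
  (herg f z y).imp fun _ => And.right

lemma mem_optPolicies_of_qValue (hp : IsTransitionKernel p)
    (hr : ∀ x a, r x a ∈ Set.Icc (0 : ℝ) 1) {g : ℝ} {b : S → ℝ} {f : S → A}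
    (hle : ∀ x a, qValue p r b x a ≤ g + b x) (hf : ∀ x, qValue p r b x (f x) = g + b x) :
    f ∈ OptPolicies p r := fun f' x =>
  (gain_le_of_qValue_le hp (fun x a => (hr x a).1) (fun z => hle z (f' z)) x).trans
    (le_gain_of_le_qValue hp (fun x a => (hr x a).2) (fun z => (hf z).ge) x)

variable [Fintype A] [Nonempty S] [Nonempty A] in
lemma exists_optimality_solution (hp : IsTransitionKernel p)
    (hr : ∀ x a, r x a ∈ Set.Icc (0 : ℝ) 1) (herg : IsErgodic p) :
    ∃ (g : ℝ) (b : S → ℝ) (f : S → A),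
      (∀ x a, qValue p r b x a ≤ g + b x) ∧ ∀ x, qValue p r b x (f x) = g + b x := by
  have hpoisson : ∀ f : S → A, ∃ gb : ℝ × (S → ℝ), ∀ x, qValue p r gb.2 x (f x) = gb.1 + gb.2 x :=
    fun f =>
      let ⟨g, b, h⟩ := exists_poisson_solution (transMatrix_mem_rowStochastic hp f)
        (herg.exists_pow_apply_pos f) fun x => r x (f x)
      ⟨(g, b), h⟩
  choose gb hgb using hpoisson
  have hgain : ∀ f x, gain p r f x = (gb f).1 := fun f x =>
    le_antisymm (gain_le_of_qValue_le hp (fun x a => (hr x a).1) (fun z => (hgb f z).le) x)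
      (le_gain_of_le_qValue hp (fun x a => (hr x a).2) (fun z => (hgb f z).ge) x)
  obtain ⟨f, -, hmax⟩ := univ.exists_max_image (fun f => (gb f).1) univ_nonempty
  refine ⟨(gb f).1, (gb f).2, f, fun x a => ?_, hgb f⟩
  by_contra! hlt
  -- otherwise switching to `a` at `x` would beat the maximal gain
  have hf' : ∀ z, (gb f).1 + (gb f).2 z ≤ qValue p r (gb f).2 z (Function.update f x a z) := by
    intro z
    rcases eq_or_ne z x with rfl | hz
    · simpa using hlt.le
    · simpa [hz] using (hgb f z).ge
  have := lt_gain_of_le_qValue hp (fun x a => (hr x a).2) hf' (by simpa using hlt)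
    fun z => herg.exists_pow_apply_pos _ z x
  rw [hgain] at this
  exact (hmax _ (mem_univ _)).not_gt this

end Optimality

section Perturbation

variable [Fintype S] [DecidableEq S] [DecidableEq A] {U : Finset (S × A)}
  {p pbar : S → A → S → ℝ} {r rbar : S → A → ℝ}

lemma isTransitionKernel_perturbP (hp : IsTransitionKernel p) (hpbar : IsTransitionKernel pbar) :
    IsTransitionKernel (perturbP U p pbar) := fun x a => by
  by_cases h : (x, a) ∈ U <;> simp [perturbP, h, hp x a, hpbar x a]

omit [Fintype S] in
lemma perturbR_mem {s : Set ℝ} (hr : ∀ x a, r x a ∈ s) (hrbar : ∀ x a, rbar x a ∈ s) (x : S)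
    (a : A) : perturbR U r rbar x a ∈ s := by
  by_cases h : (x, a) ∈ U <;> simp [perturbR, h, hr x a, hrbar x a]

lemma qValue_perturb_of_mem {b : S → ℝ} {x : S} {a : A} (h : (x, a) ∈ U) :
    qValue (perturbP U p pbar) (perturbR U r rbar) b x a = qValue pbar rbar b x a := by
  simp [qValue, perturbP, perturbR, h]

lemma qValue_perturb_of_not_mem {b : S → ℝ} {x : S} {a : A} (h : (x, a) ∉ U) :
    qValue (perturbP U p pbar) (perturbR U r rbar) b x a = qValue p r b x a := by
  simp [qValue, perturbP, perturbR, h]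

lemma mem_optPolicies_perturb (hp : IsTransitionKernel p) (hpbar : IsTransitionKernel pbar)
    (hr : ∀ x a, r x a ∈ Set.Icc (0 : ℝ) 1) (hrbar : ∀ x a, rbar x a ∈ Set.Icc (0 : ℝ) 1)
    {g : ℝ} {b : S → ℝ} {f : S → A} (hle : ∀ x a, qValue p r b x a ≤ g + b x)
    (hf : ∀ x, qValue p r b x (f x) = g + b x) (hfU : ∀ x, (x, f x) ∉ U)
    (hU : ∀ xa ∈ U, qValue pbar rbar b xa.1 xa.2 ≤ g + b xa.1) :
    f ∈ OptPolicies (perturbP U p pbar) (perturbR U r rbar) := by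
  refine mem_optPolicies_of_qValue (g := g) (b := b) (isTransitionKernel_perturbP hp hpbar)
    (perturbR_mem hr hrbar) (fun x a => ?_) fun x => by rw [qValue_perturb_of_not_mem (hfU x), hf x]
  by_cases hxa : (x, a) ∈ U
  · rw [qValue_perturb_of_mem hxa]
    exact hU _ hxa
  · rw [qValue_perturb_of_not_mem hxa]
    exact hle x a

lemma optPolicies_inter_perturb_eq_empty (hp : IsTransitionKernel p)
    (hpbar : IsTransitionKernel pbar) (hr : ∀ x a, r x a ∈ Set.Icc (0 : ℝ) 1)
    (hrbar : ∀ x a, rbar x a ∈ Set.Icc (0 : ℝ) 1) (herg : IsErgodic p) {g : ℝ} {b : S → ℝ}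
    {f : S → A} (hle : ∀ x a, qValue p r b x a ≤ g + b x)
    (hf : ∀ x, qValue p r b x (f x) = g + b x)
    (hsub : ∀ xa ∈ U, ∀ f ∈ OptPolicies p r, f xa.1 ≠ xa.2) {x₀ : S} {a₀ : A}
    (hmem : (x₀, a₀) ∈ U) (hgt : g + b x₀ < qValue pbar rbar b x₀ a₀) :
    OptPolicies p r ∩ OptPolicies (perturbP U p pbar) (perturbR U r rbar) = ∅ := by
  have hq : IsTransitionKernel (perturbP U p pbar) := isTransitionKernel_perturbP hp hpbar
  have hrq := perturbR_mem (U := U) hr hrbar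
  have hfU : ∀ z, (z, f z) ∉ U := fun z hz =>
    hsub _ hz f (mem_optPolicies_of_qValue hp hr hle hf) rfl
  refine Set.eq_empty_of_forall_notMem fun f' ⟨hf'φ, hf'ψ⟩ => ?_
  have hf'U : ∀ z, (z, f' z) ∉ U := fun z hz => hsub _ hz f' hf'φ rfl
  have hgain_f' := gain_le_of_qValue_le hq (fun x a => (hrq x a).1) (g := g) (b := b)
    (fun z => by rw [qValue_perturb_of_not_mem (hf'U z)]; exact hle z (f' z)) x₀
  set f₁ := Function.update f x₀ a₀
  have hf₁ : ∀ z, g + b z ≤ qValue (perturbP U p pbar) (perturbR U r rbar) b z (f₁ z) := by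
    intro z
    rcases eq_or_ne z x₀ with rfl | hz
    · simpa [f₁, qValue_perturb_of_mem hmem] using hgt.le
    · simpa [f₁, hz, qValue_perturb_of_not_mem (hfU z)] using (hf z).ge
  have hrows : ∀ z ≠ x₀, transMatrix (perturbP U p pbar) f₁ z = transMatrix p f z :=
    fun z hz => funext fun y => by simp [transMatrix, f₁, hz, perturbP, hfU z]
  have hgain_f₁ := lt_gain_of_le_qValue hq (fun x a => (hrq x a).2) hf₁
    (by simpa [f₁, qValue_perturb_of_mem hmem] using hgt)
    (exists_pow_apply_pos_of_rows_eq (transMatrix_mem_rowStochastic hq f₁)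
      (transMatrix_mem_rowStochastic hp f).1 hrows fun z => herg.exists_pow_apply_pos f z x₀)
  exact (hf'ψ f₁ x₀).not_gt (hgain_f'.trans_lt hgain_f₁)

end Perturbation

theorem stmt11_general [Fintype S] [Fintype A] [DecidableEq S] [DecidableEq A]
    [Nonempty S] [Nonempty A]
    (p pbar : S → A → S → ℝ) (r rbar : S → A → ℝ)
    (hp : ∀ x a, (∀ y, 0 ≤ p x a y) ∧ ∑ y, p x a y = 1)
    (hpbar : ∀ x a, (∀ y, 0 ≤ pbar x a y) ∧ ∑ y, pbar x a y = 1)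
    (hr : ∀ x a, r x a ∈ Set.Icc (0:ℝ) 1)
    (hrbar : ∀ x a, rbar x a ∈ Set.Icc (0:ℝ) 1)
    (herg : IsErgodic p)
    (U₁ U₂ : Finset (S × A))
    (hsub : ∀ xa ∈ U₁ ∪ U₂, ∀ f ∈ OptPolicies p r, f xa.1 ≠ xa.2)
    (h0 : OptPolicies p r ∩
        OptPolicies (perturbP (U₁ ∪ U₂) p pbar) (perturbR (U₁ ∪ U₂) r rbar) = ∅) :
    OptPolicies p r ∩ OptPolicies (perturbP U₁ p pbar) (perturbR U₁ r rbar) = ∅ ∨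
    OptPolicies p r ∩ OptPolicies (perturbP U₂ p pbar) (perturbR U₂ r rbar) = ∅ := by
  obtain ⟨g, b, f, hle, hf⟩ := exists_optimality_solution hp hr herg
  by_cases hU : ∀ xa ∈ U₁ ∪ U₂, qValue pbar rbar b xa.1 xa.2 ≤ g + b xa.1
  · have hfφ := mem_optPolicies_of_qValue hp hr hle hf
    have hfψ := mem_optPolicies_perturb hp hpbar hr hrbar hle hf
      (fun x hx => hsub _ hx f hfφ rfl) hU
    exact (Set.eq_empty_iff_forall_notMem.1 h0 f ⟨hfφ, hfψ⟩).elim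
  push Not at hU
  obtain ⟨⟨x₀, a₀⟩, hmem, hgt⟩ := hU
  rcases Finset.mem_union.1 hmem with h₁ | h₂
  · exact .inl <| optPolicies_inter_perturb_eq_empty hp hpbar hr hrbar herg hle hf
      (fun xa hxa => hsub xa (Finset.mem_union_left _ hxa)) h₁ hgt
  · exact .inr <| optPolicies_inter_perturb_eq_empty hp hpbar hr hrbar herg hle hf
      (fun xa hxa => hsub xa (Finset.mem_union_right _ hxa)) h₂ hgt

/-- Decoupling lemma: let `φ = (p, r)` be an ergodic finite MDP, `U₁, U₂` disjoint sets
of suboptimal state-action pairs, and `ψⱼ` the MDP equal to `(pbar, rbar)` on `Uⱼ`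
(with `U₀ = U₁ ∪ U₂`) and to `φ` elsewhere.  If `Π*(φ) ∩ Π*(ψ₀) = ∅`, then
`Π*(φ) ∩ Π*(ψ₁) = ∅` or `Π*(φ) ∩ Π*(ψ₂) = ∅`. -/
theorem stmt11 [Fintype S] [Fintype A] [DecidableEq S] [DecidableEq A]
    [Nonempty S] [Nonempty A]
    (p pbar : S → A → S → ℝ) (r rbar : S → A → ℝ)
    (hp : ∀ x a, (∀ y, 0 ≤ p x a y) ∧ ∑ y, p x a y = 1)
    (hpbar : ∀ x a, (∀ y, 0 ≤ pbar x a y) ∧ ∑ y, pbar x a y = 1)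
    (hr : ∀ x a, r x a ∈ Set.Icc (0:ℝ) 1)
    (hrbar : ∀ x a, rbar x a ∈ Set.Icc (0:ℝ) 1)
    (herg : IsErgodic p)
    (U₁ U₂ : Finset (S × A)) (hdisj : Disjoint U₁ U₂)
    (hsub : ∀ xa ∈ U₁ ∪ U₂, ∀ f ∈ OptPolicies p r, f xa.1 ≠ xa.2)
    (h0 : OptPolicies p r ∩
        OptPolicies (perturbP (U₁ ∪ U₂) p pbar) (perturbR (U₁ ∪ U₂) r rbar) = ∅) :
    OptPolicies p r ∩ OptPolicies (perturbP U₁ p pbar) (perturbR U₁ r rbar) = ∅ ∨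
    OptPolicies p r ∩ OptPolicies (perturbP U₂ p pbar) (perturbR U₂ r rbar) = ∅ :=
  stmt11_general p pbar r rbar hp hpbar hr hrbar herg U₁ U₂ hsub h0

end MDP
end

section
/- Feasibility upper bound in the unstructured case: for an ergodic MDP φ with bias span H and gaps δ*(x,a;φ), the vector η with η(x,a) = 2((H+1)/δ*(x,a;φ))² for suboptimal (x,a) (and ∞ elsewhere) satisfies: for every MDP ψ that coincides with φ except at a single suboptimal pair (x,a) and satisfies (B^a_ψ h*_φ)(x) > g*_φ + h*_φ(x), one has η(x,a)·KL_{φ|ψ}(x,a) ≥ 1. -/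
/-- KL divergence between two distributions on a finite set. -/
noncomputable def klFin {S : Type*} [Fintype S] (p p' : S → ℝ) : ℝ :=
  ∑ y, p y * Real.log (p y / p' y)

/-- KL divergence between Bernoulli distributions of means `r, r'`. -/
noncomputable def klBer (r r' : ℝ) : ℝ :=
  r * Real.log (r / r') + (1 - r) * Real.log ((1 - r) / (1 - r'))

lemma kl_key (x y : ℝ) (hx : 0 ≤ x) (hy : 0 < y) :
    x - y + (x - y) ^ 2 / (2 * (x + y)) ≤ x * Real.log (x / y) := by
  rcases eq_or_lt_of_le hx with h | h
  · rw [← h]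
    have h1 : (0 - y) ^ 2 / (2 * (0 + y)) = y / 2 := by
      field_simp; ring
    rw [zero_mul, h1]
    linarith
  · set u := Real.sqrt x with hu
    set v := Real.sqrt y with hv
    have hu0 : 0 < u := Real.sqrt_pos.2 h
    have hv0 : 0 < v := Real.sqrt_pos.2 hy
    have hux : u ^ 2 = x := Real.sq_sqrt hx
    have hvy : v ^ 2 = y := Real.sq_sqrt hy.le
    have hlog : 2 * (1 - v / u) ≤ Real.log (x / y) := by
      have h1 : Real.log (v / u) ≤ v / u - 1 :=
        Real.log_le_sub_one_of_pos (by positivity)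
      have h2 : Real.log (x / y) = - (2 * Real.log (v / u)) := by
        have hx' : Real.log x = 2 * Real.log u := by
          rw [← hux, Real.log_pow]; push_cast; ring
        have hy' : Real.log y = 2 * Real.log v := by
          rw [← hvy, Real.log_pow]; push_cast; ring
        rw [Real.log_div (ne_of_gt h) (ne_of_gt hy),
          Real.log_div (ne_of_gt hv0) (ne_of_gt hu0), hx', hy']
        ring
      rw [h2]; linarith
    have hmul : x * (2 * (1 - v / u)) ≤ x * Real.log (x / y) :=
      mul_le_mul_of_nonneg_left hlog hx
    refine le_trans ?_ hmul
    have hxu : x * (2 * (1 - v / u)) = 2 * u ^ 2 - 2 * u * v := by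
      rw [← hux]; field_simp
    rw [hxu, ← hux, ← hvy]
    have key2 : (u ^ 2 - v ^ 2) ^ 2 / (2 * (u ^ 2 + v ^ 2)) ≤ (u - v) ^ 2 := by
      rw [div_le_iff₀ (by positivity)]
      nlinarith [sq_nonneg ((u - v) ^ 2)]
    nlinarith [key2]

lemma pinsker_quarter {S : Type*} [Fintype S] (p p' : S → ℝ)
    (hp0 : ∀ y, 0 ≤ p y) (hp'0 : ∀ y, 0 < p' y)
    (hp1 : ∑ y, p y = 1) (hp'1 : ∑ y, p' y = 1) :
    (∑ y, |p y - p' y|) ^ 2 / 4 ≤ klFin p p' := by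
  have hstep : ∀ y, p y - p' y + (p y - p' y) ^ 2 / (2 * (p y + p' y))
      ≤ p y * Real.log (p y / p' y) := by
    intro y
    have := kl_key (p y) (p' y) (hp0 y) (hp'0 y)
    linarith
  have hsum : ∑ y, (p y - p' y + (p y - p' y) ^ 2 / (2 * (p y + p' y))) ≤ klFin p p' :=
    Finset.sum_le_sum fun y _ => hstep y
  rw [Finset.sum_add_distrib, Finset.sum_sub_distrib, hp1, hp'1] at hsum
  simp only [sub_self, zero_add] at hsum
  refine le_trans ?_ hsum
  have hengel := Finset.sq_sum_div_le_sum_sq_div Finset.univ (fun y => |p y - p' y|)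
    (g := fun y => 2 * (p y + p' y)) (fun y _ => by have := hp0 y; have := hp'0 y; positivity)
  have hd : ∑ y, (2 * (p y + p' y)) = 4 := by
    rw [← Finset.mul_sum, Finset.sum_add_distrib, hp1, hp'1]; norm_num
  rw [hd] at hengel
  refine hengel.trans (le_of_eq ?_)
  exact Finset.sum_congr rfl fun y _ => by rw [sq_abs]

set_option maxHeartbeats 1000000 in
/-- Feasibility upper bound in the unstructured case: for bias function `hb` with span
at most `H`, optimal value `g + hb x₀` at state `x₀` and suboptimal action with gap
`δ* = g + hb x₀ − (r + ∑ p·hb) > 0`, any confusing kernel `(p', r')` making the action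
look optimal, i.e. `r' + ∑ p'·hb > g + hb x₀`, satisfies
`2((H+1)/δ*)² · KL ≥ 1` where `KL = klFin p p' + klBer r r'`. -/
theorem stmt13 {S : Type*} [Fintype S] [Nonempty S]
    (p p' : S → ℝ)
    (hp0 : ∀ y, 0 ≤ p y) (hp'0 : ∀ y, 0 < p' y)
    (hp1 : ∑ y, p y = 1) (hp'1 : ∑ y, p' y = 1)
    (r r' : ℝ) (hr : r ∈ Set.Ioo (0:ℝ) 1) (hr' : r' ∈ Set.Ioo (0:ℝ) 1)
    (hb : S → ℝ) (g H : ℝ) (hH : 0 ≤ H) (hspan : ∀ x y, hb x - hb y ≤ H)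
    (x₀ : S)
    (hgap : 0 < g + hb x₀ - (r + ∑ y, p y * hb y))
    (hconf : g + hb x₀ < r' + ∑ y, p' y * hb y) :
    1 ≤ 2 * ((H + 1) / (g + hb x₀ - (r + ∑ y, p y * hb y))) ^ 2 *
      (klFin p p' + klBer r r') := by
  obtain ⟨hr0, hr1⟩ := hr
  obtain ⟨hr'0, hr'1⟩ := hr'
  set δ : ℝ := g + hb x₀ - (r + ∑ y, p y * hb y) with hδ
  set a : ℝ := ∑ y, |p y - p' y| with ha
  set b : ℝ := |r - r'| with hb'
  -- Step 1: δ < b + (H/2) * a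
  obtain ⟨y₀, -, hy₀⟩ := Finset.exists_min_image Finset.univ hb ⟨Classical.arbitrary S,
    Finset.mem_univ _⟩
  obtain ⟨y₁, -, hy₁⟩ := Finset.exists_max_image Finset.univ hb ⟨Classical.arbitrary S,
    Finset.mem_univ _⟩
  set c : ℝ := (hb y₀ + hb y₁) / 2 with hc
  have hbc : ∀ y, |hb y - c| ≤ H / 2 := by
    intro y
    rw [abs_le]
    have h1 := hy₀ y (Finset.mem_univ y)
    have h2 := hy₁ y (Finset.mem_univ y)
    have h3 := hspan y₁ y₀
    constructor <;> [skip; skip] <;> rw [hc] <;> linarith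
  have hsum0 : ∑ y, (p' y - p y) * hb y = ∑ y, (p' y - p y) * (hb y - c) := by
    have : ∑ y, (p' y - p y) * (hb y - c)
        = ∑ y, (p' y - p y) * hb y - c * ∑ y, (p' y - p y) := by
      rw [Finset.mul_sum, ← Finset.sum_sub_distrib]
      exact Finset.sum_congr rfl fun y _ => by ring
    rw [this, Finset.sum_sub_distrib, hp'1, hp1]
    ring
  have hsumle : ∑ y, (p' y - p y) * (hb y - c) ≤ (H / 2) * a := by
    rw [ha, Finset.mul_sum]
    refine Finset.sum_le_sum fun y _ => ?_
    calc (p' y - p y) * (hb y - c) ≤ |(p' y - p y) * (hb y - c)| := le_abs_self _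
      _ = |p' y - p y| * |hb y - c| := abs_mul _ _
      _ ≤ |p' y - p y| * (H / 2) := by
          exact mul_le_mul_of_nonneg_left (hbc y) (abs_nonneg _)
      _ = H / 2 * |p y - p' y| := by rw [abs_sub_comm]; ring
  have hsplit : ∑ y, p' y * hb y - ∑ y, p y * hb y = ∑ y, (p' y - p y) * hb y := by
    rw [← Finset.sum_sub_distrib]
    exact Finset.sum_congr rfl fun y _ => by ring
  have step1 : δ < b + (H / 2) * a := by
    have h1 : δ < (r' - r) + (∑ y, p' y * hb y - ∑ y, p y * hb y) := by
      rw [hδ]; linarith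
    have h2 : r' - r ≤ b := by rw [hb', abs_sub_comm]; exact le_abs_self _
    rw [hsplit, hsum0] at h1
    linarith
  -- Step 2: Pinsker for transitions
  have step2 : a ^ 2 / 4 ≤ klFin p p' := pinsker_quarter p p' hp0 hp'0 hp1 hp'1
  -- Step 3: reward term
  have step3 : b ^ 2 / 2 ≤ klBer r r' := by
    have k1 := kl_key r r' hr0.le hr'0
    have k2 := kl_key (1 - r) (1 - r') (by linarith) (by linarith)
    have e1 : (r - r') ^ 2 / 4 ≤ (r - r') ^ 2 / (2 * (r + r')) := by
      apply div_le_div_of_nonneg_left (sq_nonneg _) (by linarith) (by linarith)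
    have e2 : (r - r') ^ 2 / 4 ≤ (1 - r - (1 - r')) ^ 2 / (2 * (1 - r + (1 - r'))) := by
      have : (1 - r - (1 - r')) ^ 2 = (r - r') ^ 2 := by ring
      rw [this]
      apply div_le_div_of_nonneg_left (sq_nonneg _) (by linarith) (by linarith)
    have hbsq : b ^ 2 = (r - r') ^ 2 := sq_abs _
    rw [klBer]
    have hsub : (1 : ℝ) - r - (1 - r') = r' - r := by ring
    nlinarith [k1, k2]
  -- Step 4: combine
  have ha0 : 0 ≤ a := Finset.sum_nonneg fun y _ => abs_nonneg _
  have hb0 : 0 ≤ b := abs_nonneg _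
  have hKL : a ^ 2 / 4 + b ^ 2 / 2 ≤ klFin p p' + klBer r r' := by linarith
  have hcs : (b + (H / 2) * a) ^ 2 ≤ (2 + H ^ 2) * (b ^ 2 / 2 + a ^ 2 / 4) := by
    nlinarith [sq_nonneg (H * b - a), sq_nonneg a, sq_nonneg b, sq_nonneg H]
  have hδ2 : δ ^ 2 ≤ 2 * (H + 1) ^ 2 * (klFin p p' + klBer r r') := by
    have h1 : δ ^ 2 ≤ (b + (H / 2) * a) ^ 2 :=
      pow_le_pow_left₀ hgap.le step1.le 2
    have h2 : (2 + H ^ 2) * (b ^ 2 / 2 + a ^ 2 / 4) ≤ 2 * (H + 1) ^ 2 * (b ^ 2 / 2 + a ^ 2 / 4) := by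
      have : (2 : ℝ) + H ^ 2 ≤ 2 * (H + 1) ^ 2 := by nlinarith
      apply mul_le_mul_of_nonneg_right this (by positivity)
    have h3 : 2 * (H + 1) ^ 2 * (b ^ 2 / 2 + a ^ 2 / 4)
        ≤ 2 * (H + 1) ^ 2 * (klFin p p' + klBer r r') := by
      apply mul_le_mul_of_nonneg_left (by linarith) (by positivity)
    exact le_trans (le_trans h1 hcs) (le_trans h2 h3)
  rw [div_pow]
  rw [show 2 * ((H + 1) ^ 2 / δ ^ 2) * (klFin p p' + klBer r r')
      = 2 * (H + 1) ^ 2 * (klFin p p' + klBer r r') / δ ^ 2 by ring]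
  rw [le_div_iff₀ (by positivity)]
  linarith
end
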